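/- Let V be a complex vector space with an s.i.p. [·,·] and associated norm ‖x‖ = √([x,x]), and let x, y ∈ V with y ≠ 0. Then the one-sided derivatives (‖·‖'_x(y))⁻ := lim_{λ→0⁻} (‖y+λx‖ − ‖y‖)/λ and (‖·‖'_x(y))⁺ := lim_{λ→0⁺} (‖y+λx‖ − ‖y‖)/λ (λ real) exist and satisfy ‖y‖·(‖·‖'_x(y))⁻ ≤ Re[x,y] ≤ ‖y‖·(‖·‖'_x(y))⁺. In particular, if the norm is Gâteaux differentiable at y in direction x, then Re[x,y] = ‖y‖·‖·‖'_x(y). -/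

import Mathlib

/-!
Pairing `y + t • x` with `y` and using Cauchy–Schwarz gives, for every real `t`,
`t · Re[x,y] ≤ ‖y‖ · (‖y + t • x‖ - ‖y‖)`: dividing by `t`, `Re[x,y]` lies below `‖y‖` times every
difference quotient with `t > 0` and above every one with `t < 0`. The triangle inequality makes
`t ↦ ‖y + t • x‖` convex, so both one-sided derivatives at `0` exist, and the bounds pass to the
limits.
-/

open Topology Filter Set

structure IsSemiInnerProduct {V : Type*} [AddCommGroup V] [Module ℂ V] (ip : V → V → ℂ) :
    Prop where
  add_left : ∀ x y z : V, ip (x + y) z = ip x z + ip y z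
  smul_left : ∀ (c : ℂ) (x y : V), ip (c • x) y = c * ip x y
  re_pos : ∀ x : V, x ≠ 0 → 0 < (ip x x).re ∧ (ip x x).im = 0
  norm_sq_le : ∀ x y : V, ‖ip x y‖ ^ 2 ≤ (ip x x).re * (ip y y).re
  smul_right : ∀ (c : ℂ) (x y : V), ip x (c • y) = (starRingEnd ℂ) c * ip x y

noncomputable def sipNorm {V : Type*} (ip : V → V → ℂ) (x : V) : ℝ := Real.sqrt (ip x x).re

lemma sipNorm_nonneg {V : Type*} (ip : V → V → ℂ) (x : V) : 0 ≤ sipNorm ip x :=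
  Real.sqrt_nonneg _

lemma slope_sipNorm_line {V : Type*} [AddCommGroup V] [Module ℂ V] (ip : V → V → ℂ)
    (x y : V) (t : ℝ) : slope (fun t : ℝ ↦ sipNorm ip (y + (t : ℂ) • x)) 0 t
      = (sipNorm ip (y + (t : ℂ) • x) - sipNorm ip y) / t := by
  simp [slope_def_field]

namespace IsSemiInnerProduct

variable {V : Type*} [AddCommGroup V] [Module ℂ V] {ip : V → V → ℂ}
  (hip : IsSemiInnerProduct ip)
include hip

lemma zero_left (z : V) : ip 0 z = 0 := by
  simpa using hip.add_left 0 0 z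

lemma re_self_nonneg (z : V) : 0 ≤ (ip z z).re := by
  rcases eq_or_ne z 0 with rfl | hz
  · simp [hip.zero_left]
  · exact (hip.re_pos z hz).1.le

lemma sipNorm_sq (z : V) : sipNorm ip z ^ 2 = (ip z z).re :=
  Real.sq_sqrt (hip.re_self_nonneg z)

lemma re_le_sipNorm_mul (a b : V) : (ip a b).re ≤ sipNorm ip a * sipNorm ip b := by
  refine (Complex.re_le_norm _).trans
    ((pow_le_pow_iff_left₀ (norm_nonneg _) ?_ two_ne_zero).1 ?_)
  · exact mul_nonneg (sipNorm_nonneg ip a) (sipNorm_nonneg ip b)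
  · rw [mul_pow, hip.sipNorm_sq, hip.sipNorm_sq]
    exact hip.norm_sq_le a b

lemma sipNorm_add_le (a b : V) : sipNorm ip (a + b) ≤ sipNorm ip a + sipNorm ip b := by
  have hsq : sipNorm ip (a + b) ^ 2 ≤ (sipNorm ip a + sipNorm ip b) * sipNorm ip (a + b) := by
    rw [hip.sipNorm_sq, hip.add_left, Complex.add_re, add_mul]
    exact add_le_add (hip.re_le_sipNorm_mul _ _) (hip.re_le_sipNorm_mul _ _)
  by_contra! hlt
  nlinarith [sipNorm_nonneg ip a, sipNorm_nonneg ip b]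

lemma sipNorm_ofReal_smul (r : ℝ) (v : V) : sipNorm ip ((r : ℂ) • v) = |r| * sipNorm ip v := by
  have hre : (ip ((r : ℂ) • v) ((r : ℂ) • v)).re = r ^ 2 * (ip v v).re := by
    rw [hip.smul_left, hip.smul_right, Complex.conj_ofReal, ← mul_assoc, ← Complex.ofReal_mul,
      Complex.re_ofReal_mul, sq]
  rw [sipNorm, sipNorm, hre, Real.sqrt_mul (sq_nonneg r), Real.sqrt_sq_eq_abs]

lemma convexOn_sipNorm_line (x y : V) :
    ConvexOn ℝ univ (fun t : ℝ ↦ sipNorm ip (y + (t : ℂ) • x)) := by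
  refine ⟨convex_univ, fun u _ v _ a b ha hb hab ↦ ?_⟩
  have hline : y + ((a • u + b • v : ℝ) : ℂ) • x
      = (a : ℂ) • (y + (u : ℂ) • x) + (b : ℂ) • (y + (v : ℂ) • x) := by
    have habC : (1 : ℂ) = a + b := by exact_mod_cast hab.symm
    push_cast [smul_eq_mul]
    linear_combination (norm := module) habC • y
  calc sipNorm ip (y + ((a • u + b • v : ℝ) : ℂ) • x)
      ≤ sipNorm ip ((a : ℂ) • (y + (u : ℂ) • x))
          + sipNorm ip ((b : ℂ) • (y + (v : ℂ) • x)) := hline ▸ hip.sipNorm_add_le _ _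
    _ = a • sipNorm ip (y + (u : ℂ) • x) + b • sipNorm ip (y + (v : ℂ) • x) := by
        rw [hip.sipNorm_ofReal_smul, hip.sipNorm_ofReal_smul, abs_of_nonneg ha,
          abs_of_nonneg hb, smul_eq_mul, smul_eq_mul]

lemma mul_re_le_sipNorm_mul_sub (x y : V) (t : ℝ) :
    t * (ip x y).re ≤ sipNorm ip y * (sipNorm ip (y + (t : ℂ) • x) - sipNorm ip y) := by
  have hre : (ip (y + (t : ℂ) • x) y).re = sipNorm ip y ^ 2 + t * (ip x y).re := by
    rw [hip.add_left, hip.smul_left, Complex.add_re, Complex.re_ofReal_mul, hip.sipNorm_sq]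
  have := hip.re_le_sipNorm_mul (y + (t : ℂ) • x) y
  nlinarith

lemma re_le_sipNorm_mul_of_tendsto_nhdsGT {x y : V} {d : ℝ}
    (h : Tendsto (slope (fun t : ℝ ↦ sipNorm ip (y + (t : ℂ) • x)) 0) (𝓝[>] 0) (𝓝 d)) :
    (ip x y).re ≤ sipNorm ip y * d := by
  refine ge_of_tendsto (h.const_mul _) (eventually_nhdsWithin_of_forall fun t (ht : 0 < t) ↦ ?_)
  rw [slope_sipNorm_line, mul_div_assoc', le_div_iff₀ ht, mul_comm]
  exact hip.mul_re_le_sipNorm_mul_sub x y t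

lemma sipNorm_mul_le_re_of_tendsto_nhdsLT {x y : V} {d : ℝ}
    (h : Tendsto (slope (fun t : ℝ ↦ sipNorm ip (y + (t : ℂ) • x)) 0) (𝓝[<] 0) (𝓝 d)) :
    sipNorm ip y * d ≤ (ip x y).re := by
  refine le_of_tendsto (h.const_mul _) (eventually_nhdsWithin_of_forall fun t (ht : t < 0) ↦ ?_)
  rw [slope_sipNorm_line, mul_div_assoc', div_le_iff_of_neg ht, mul_comm]
  exact hip.mul_re_le_sipNorm_mul_sub x y t

end IsSemiInnerProduct

theorem stmt_18_general {V : Type*} [AddCommGroup V] [Module ℂ V] (ip : V → V → ℂ)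
    (nrm : V → ℝ) (hnrm : ∀ x, nrm x = Real.sqrt (ip x x).re)
    (h_add : ∀ x y z : V, ip (x + y) z = ip x z + ip y z)
    (h_sm1 : ∀ (c : ℂ) (x y : V), ip (c • x) y = c * ip x y)
    (h_pos : ∀ x : V, x ≠ 0 → 0 < (ip x x).re ∧ (ip x x).im = 0)
    (h_cs : ∀ x y : V, ‖ip x y‖ ^ 2 ≤ (ip x x).re * (ip y y).re)
    (h_sm2 : ∀ (c : ℂ) (x y : V), ip x (c • y) = (starRingEnd ℂ) c * ip x y)
    (x y : V) :
    ∃ dm dp : ℝ,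
      Tendsto (fun lam : ℝ => (nrm (y + (lam : ℂ) • x) - nrm y) / lam) (𝓝[<] 0) (𝓝 dm) ∧
      Tendsto (fun lam : ℝ => (nrm (y + (lam : ℂ) • x) - nrm y) / lam) (𝓝[>] 0) (𝓝 dp) ∧
      nrm y * dm ≤ (ip x y).re ∧ (ip x y).re ≤ nrm y * dp ∧
      ∀ d : ℝ,
        Tendsto (fun lam : ℝ => (nrm (y + (lam : ℂ) • x) - nrm y) / lam) (𝓝[≠] 0) (𝓝 d) →
        (ip x y).re = nrm y * d := by
  have hip : IsSemiInnerProduct ip := ⟨h_add, h_sm1, h_pos, h_cs, h_sm2⟩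
  obtain rfl : nrm = sipNorm ip := funext hnrm
  simp_rw [← slope_sipNorm_line]
  have hconv := hip.convexOn_sipNorm_line x y
  have h0 : (0 : ℝ) ∈ interior univ := by simp
  have hleft := (hasDerivWithinAt_iff_tendsto_slope' self_notMem_Iio).1
    (hconv.hasDerivWithinAt_leftDeriv_of_mem_interior h0)
  have hright := (hasDerivWithinAt_iff_tendsto_slope' self_notMem_Ioi).1
    (hconv.hasDerivWithinAt_rightDeriv_of_mem_interior h0)
  refine ⟨_, _, hleft, hright, hip.sipNorm_mul_le_re_of_tendsto_nhdsLT hleft,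
    hip.re_le_sipNorm_mul_of_tendsto_nhdsGT hright, fun d hd ↦ le_antisymm ?_ ?_⟩
  · exact hip.re_le_sipNorm_mul_of_tendsto_nhdsGT <| hd.mono_left (nhdsGT_le_nhdsNE 0)
  · exact hip.sipNorm_mul_le_re_of_tendsto_nhdsLT <| hd.mono_left (nhdsLT_le_nhdsNE 0)

/-- In a complex s.i.p. space with norm `nrm x = √(Re[x,x])`, for `y ≠ 0` the one-sided
derivatives of `λ ↦ ‖y + λx‖` at `0` exist and satisfy
`‖y‖·(‖·‖'_x(y))⁻ ≤ Re[x,y] ≤ ‖y‖·(‖·‖'_x(y))⁺`; in particular if the norm is Gâteaux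
differentiable at `y` in direction `x` with derivative `d` then `Re[x,y] = ‖y‖·d`. -/
theorem stmt_18 {V : Type*} [AddCommGroup V] [Module ℂ V] (ip : V → V → ℂ)
    (nrm : V → ℝ) (hnrm : ∀ x, nrm x = Real.sqrt (ip x x).re)
    (h_add : ∀ x y z : V, ip (x + y) z = ip x z + ip y z)
    (h_sm1 : ∀ (c : ℂ) (x y : V), ip (c • x) y = c * ip x y)
    (h_pos : ∀ x : V, x ≠ 0 → 0 < (ip x x).re ∧ (ip x x).im = 0)
    (h_cs : ∀ x y : V, ‖ip x y‖ ^ 2 ≤ (ip x x).re * (ip y y).re)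
    (h_sm2 : ∀ (c : ℂ) (x y : V), ip x (c • y) = (starRingEnd ℂ) c * ip x y)
    (x y : V) (hy : y ≠ 0) :
    ∃ dm dp : ℝ,
      Tendsto (fun lam : ℝ => (nrm (y + (lam : ℂ) • x) - nrm y) / lam) (𝓝[<] 0) (𝓝 dm) ∧
      Tendsto (fun lam : ℝ => (nrm (y + (lam : ℂ) • x) - nrm y) / lam) (𝓝[>] 0) (𝓝 dp) ∧
      nrm y * dm ≤ (ip x y).re ∧ (ip x y).re ≤ nrm y * dp ∧
      ∀ d : ℝ,
        Tendsto (fun lam : ℝ => (nrm (y + (lam : ℂ) • x) - nrm y) / lam) (𝓝[≠] 0) (𝓝 d) →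
        (ip x y).re = nrm y * d :=
  stmt_18_general ip nrm hnrm h_add h_sm1 h_pos h_cs h_sm2 x y
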